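/- With the 3-SAT construction of π_1, π_2 as described, suppose z_1, z_2 are natural numbers such that π_1^{z_1} π_2^{z_2} is fixpoint-free. Then for every j ∈ [m] there is an a ∈ [3] such that z_2 ≢ 0 mod p̃_{i_a}, where C_j = {x̃_{i_1}, x̃_{i_2}, x̃_{i_3}}. -/

import Mathlib

/-! 3-SAT construction.  Variables are `x_1, …, x_n`, indexed by `Fin n`; the `j`-th clause is
`C_j = {x̃_{idx j 0}, x̃_{idx j 1}, x̃_{idx j 2}}` with `idx j` strictly monotone, where the
literal on variable `idx j a` is negated iff `neg j a = true`.  The first `2n` primes are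
`p_1, …, p_n, p̄_1, …, p̄_n` with `p_i = P (i-1)` and `p̄_i = P (n+i-1)` for the enumeration
`P` of the primes (`P 0 = 2`).  Every `Sym(ℓ)`-component is realized on `Fin ℓ`, and the
`ℓ`-cycle `([ℓ]) = (1,2,…,ℓ)` is realized as `finRotate ℓ`.  Fixpoint-freeness is checked on
the disjoint union of all components. -/

namespace SatConstruction

/-- `P i` is the `(i+1)`-st prime: `P 0 = 2`, `P 1 = 3`, ….  The prime `p_i` associated with
the positive literal `x_i` is `P (i-1)` and the prime `p̄_i` associated with the negative
literal `x̄_i` is `P (n+i-1)` (with `i ∈ [n]` one-indexed). -/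
noncomputable def P (i : ℕ) : ℕ := Nat.nth Nat.Prime i

/-- `p̃` of a literal: the prime of the underlying variable, according to the sign. -/
noncomputable def ptil (n : ℕ) {m : ℕ} (idx : Fin m → Fin 3 → Fin n)
    (neg : Fin m → Fin 3 → Bool) (j : Fin m) (a : Fin 3) : ℕ :=
  if neg j a then P (n + (idx j a).val) else P (idx j a).val

/-- `r_j = p̃_{i_1} p̃_{i_2} p̃_{i_3}` for the clause `C_j`. -/
noncomputable def r (n : ℕ) {m : ℕ} (idx : Fin m → Fin 3 → Fin n)
    (neg : Fin m → Fin 3 → Bool) (j : Fin m) : ℕ :=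
  ptil n idx neg j 0 * ptil n idx neg j 1 * ptil n idx neg j 2

/-- The underlying set of the group
`G = ∏_{i=1}^n (Sym(p_i) × Sym(p̄_i) × Sym(p_i p̄_i)^{(p_i-1)(p̄_i-1)+1}) × ∏_{j=1}^m Sym(r_j)`
(embedded in a symmetric group).  The `(p_i-1)(p̄_i-1)+1` copies of `Sym(p_i p̄_i)` are
indexed by `Option (Fin (p_i - 1) × Fin (p̄_i - 1))`: `none` is the component of `α_{i,3}`
and `some (l-1, k-1)` is the component of `α_{i,l,k}`. -/
abbrev Omega (n : ℕ) {m : ℕ} (idx : Fin m → Fin 3 → Fin n)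
    (neg : Fin m → Fin 3 → Bool) : Type :=
  (Σ i : Fin n,
      (Fin (P i.val) ⊕ Fin (P (n + i.val))) ⊕
        (Σ _c : Option (Fin (P i.val - 1) × Fin (P (n + i.val) - 1)),
          Fin (P i.val * P (n + i.val)))) ⊕
    (Σ j : Fin m, Fin (r n idx neg j))

/-- `π_1 = (α_1,…,α_n,β_1,…,β_m)` with
`α_i = (α_{i,1}, α_{i,2}, α_{i,3}, α_{i,1,1}, …, α_{i,p_i-1,p̄_i-1})`,
`α_{i,1} = ([p_i])`, `α_{i,2} = ([p̄_i])`, `α_{i,3} = id`,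
`α_{i,l,k} = ([p_i p̄_i])^{s_{i,l,k}}` and `β_j = id`. -/
noncomputable def pi1 (n : ℕ) {m : ℕ} (idx : Fin m → Fin 3 → Fin n)
    (neg : Fin m → Fin 3 → Bool) (s : Fin n → ℕ → ℕ → ℕ) :
    Equiv.Perm (Omega n idx neg) :=
  Equiv.sumCongr
    (Equiv.sigmaCongrRight fun i =>
      Equiv.sumCongr
        (Equiv.sumCongr (finRotate _) (finRotate _))
        (Equiv.sigmaCongrRight fun c =>
          match c with
          | none => Equiv.refl _
          | some (l, k) =>
              finRotate (P i.val * P (n + i.val)) ^ s i (l.val + 1) (k.val + 1)))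
    (Equiv.refl _)

/-- `π_2 = (γ_1,…,γ_n,δ_1,…,δ_m)` with
`γ_i = (γ_{i,1}, γ_{i,2}, γ_{i,3}, γ_{i,1,1}, …, γ_{i,p_i-1,p̄_i-1})`,
`γ_{i,1} = γ_{i,2} = id`, `γ_{i,3} = γ_{i,l,k} = ([p_i p̄_i])` and `δ_j = ([r_j])`. -/
noncomputable def pi2 (n : ℕ) {m : ℕ} (idx : Fin m → Fin 3 → Fin n)
    (neg : Fin m → Fin 3 → Bool) :
    Equiv.Perm (Omega n idx neg) :=
  Equiv.sumCongr
    (Equiv.sigmaCongrRight fun _i =>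
      Equiv.sumCongr (Equiv.refl _) (Equiv.sigmaCongrRight fun _c => finRotate _))
    (Equiv.sigmaCongrRight fun j => finRotate (r n idx neg j))

/-! On the clause component `j`, `π_1` acts trivially and `π_2` as the `r_j`-cycle, so a
fixpoint-free `π_1^{z_1} π_2^{z_2}` forces `r_j ∤ z_2`.  The three primes `p̃` of a clause
belong to distinct variables, hence are distinct, so `r_j ∤ z_2` means one of them does not
divide `z_2`. -/

theorem finRotate_pow_self (k : ℕ) : finRotate k ^ k = 1 := by
  match k with
  | 0 | 1 => exact Subsingleton.elim _ _
  | k + 2 =>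
    have horder := (isCycle_finRotate (n := k)).orderOf
    rw [support_finRotate, Finset.card_univ, Fintype.card_fin] at horder
    have := pow_orderOf_eq_one (finRotate (k + 2))
    rwa [horder] at this

theorem finRotate_pow_eq_one_of_dvd {k z : ℕ} (h : k ∣ z) : finRotate k ^ z = 1 := by
  obtain ⟨t, rfl⟩ := h
  rw [pow_mul, finRotate_pow_self, one_pow]

theorem _root_.Equiv.Perm.sumCongr_pow_apply_inr {α β : Type*} (σ : Equiv.Perm α)
    (τ : Equiv.Perm β) (z : ℕ) (b : β) :
    (Equiv.Perm.sumCongr σ τ ^ z) (Sum.inr b) = Sum.inr ((τ ^ z) b) := by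
  rw [show σ.sumCongr τ = Equiv.Perm.sumCongrHom α β (σ, τ) from rfl, ← map_pow]
  rfl

theorem _root_.Equiv.Perm.sigmaCongrRight_pow_apply {α : Type*} {β : α → Type*}
    (F : ∀ a, Equiv.Perm (β a)) (z : ℕ) (a : α) (b : β a) :
    (Equiv.Perm.sigmaCongrRight F ^ z) ⟨a, b⟩ = ⟨a, (F a ^ z) b⟩ := by
  rw [show Equiv.Perm.sigmaCongrRight F = Equiv.Perm.sigmaCongrRightHom β F from rfl,
    ← map_pow]
  rfl

theorem P_prime (i : ℕ) : (P i).Prime := Nat.prime_nth_prime i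

theorem P_injective : Function.Injective P := Nat.nth_injective Nat.infinite_setOfPred_prime

section Clause

variable (n : ℕ) {m : ℕ} (idx : Fin m → Fin 3 → Fin n) (neg : Fin m → Fin 3 → Bool)

theorem ptil_eq_P (j : Fin m) (a : Fin 3) :
    ptil n idx neg j a = P (if neg j a then n + (idx j a).val else (idx j a).val) :=
  (apply_ite P _ _ _).symm

theorem ptil_prime (j : Fin m) (a : Fin 3) : (ptil n idx neg j a).Prime := by
  rw [ptil_eq_P]; exact P_prime _

theorem ptil_coprime {j : Fin m} (hinj : Function.Injective (idx j)) {a b : Fin 3}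
    (hab : a ≠ b) : (ptil n idx neg j a).Coprime (ptil n idx neg j b) := by
  rw [ptil_eq_P, ptil_eq_P, Nat.coprime_primes (P_prime _) (P_prime _)]
  intro hP
  have hindex := P_injective hP
  have hvar : (idx j a).val ≠ (idx j b).val := fun h => hab (hinj (Fin.ext h))
  have := (idx j a).isLt
  have := (idx j b).isLt
  -- the prime of a literal on `x_i` is `P i` or `P (n + i)` with `i < n`
  split_ifs at hindex <;> omega

theorem r_pos (j : Fin m) : 0 < r n idx neg j :=
  Nat.mul_pos (Nat.mul_pos (ptil_prime n idx neg j 0).pos (ptil_prime n idx neg j 1).pos)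
    (ptil_prime n idx neg j 2).pos

theorem r_dvd_of_forall_ptil_dvd {j : Fin m} (hinj : Function.Injective (idx j)) {z : ℕ}
    (h : ∀ a, ptil n idx neg j a ∣ z) : r n idx neg j ∣ z :=
  ((ptil_coprime n idx neg hinj (by decide : (0 : Fin 3) ≠ 2)).mul_left
      (ptil_coprime n idx neg hinj (by decide : (1 : Fin 3) ≠ 2))).mul_dvd_of_dvd_of_dvd
    ((ptil_coprime n idx neg hinj (by decide : (0 : Fin 3) ≠ 1)).mul_dvd_of_dvd_of_dvd
      (h 0) (h 1)) (h 2)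

theorem pi1_pow_apply_inr (s : Fin n → ℕ → ℕ → ℕ) (z : ℕ)
    (y : Σ j : Fin m, Fin (r n idx neg j)) :
    (pi1 n idx neg s ^ z) (Sum.inr y) = Sum.inr y := by
  rw [pi1, Equiv.Perm.sumCongr_pow_apply_inr, ← Equiv.Perm.one_def, one_pow,
    Equiv.Perm.one_apply]

theorem pi2_pow_apply_inr (z : ℕ) (j : Fin m) (x : Fin (r n idx neg j)) :
    (pi2 n idx neg ^ z) (Sum.inr ⟨j, x⟩) = Sum.inr ⟨j, (finRotate (r n idx neg j) ^ z) x⟩ := by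
  rw [pi2, Equiv.Perm.sumCongr_pow_apply_inr, Equiv.Perm.sigmaCongrRight_pow_apply]

theorem pi1_pow_mul_pi2_pow_apply_inr_of_r_dvd (s : Fin n → ℕ → ℕ → ℕ) (z1 : ℕ) {z2 : ℕ}
    {j : Fin m} (h : r n idx neg j ∣ z2) (x : Fin (r n idx neg j)) :
    (pi1 n idx neg s ^ z1 * pi2 n idx neg ^ z2) (Sum.inr ⟨j, x⟩) = Sum.inr ⟨j, x⟩ := by
  rw [Equiv.Perm.mul_apply, pi2_pow_apply_inr, finRotate_pow_eq_one_of_dvd h,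
    Equiv.Perm.one_apply, pi1_pow_apply_inr]

end Clause

theorem exists_not_dvd_z2_general
    (n m : ℕ) (idx : Fin m → Fin 3 → Fin n) (hidx : ∀ j, StrictMono (idx j))
    (neg : Fin m → Fin 3 → Bool)
    (s : Fin n → ℕ → ℕ → ℕ)
    (z1 z2 : ℕ)
    (hfpf : ∀ a : Omega n idx neg,
      (pi1 n idx neg s ^ z1 * pi2 n idx neg ^ z2) a ≠ a) :
    ∀ j : Fin m, ∃ a : Fin 3, ¬ ptil n idx neg j a ∣ z2 := by
  intro j
  by_contra! h
  have hr : r n idx neg j ∣ z2 := r_dvd_of_forall_ptil_dvd n idx neg (hidx j).injective h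
  exact hfpf _ (pi1_pow_mul_pi2_pow_apply_inr_of_r_dvd n idx neg s z1 hr ⟨0, r_pos n idx neg j⟩)

/-- If `π_1^{z_1} π_2^{z_2}` is fixpoint-free then for every clause
`C_j = {x̃_{i_1}, x̃_{i_2}, x̃_{i_3}}` there is an `a ∈ [3]` with `z_2 ≢ 0 (mod p̃_{i_a})`. -/
theorem exists_not_dvd_z2
    (n m : ℕ) (idx : Fin m → Fin 3 → Fin n) (hidx : ∀ j, StrictMono (idx j))
    (neg : Fin m → Fin 3 → Bool)
    (s : Fin n → ℕ → ℕ → ℕ)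
    -- `s_{i,l,k}` is the unique number in `[0, p_i p̄_i - 1]` with `s_{i,l,k} ≡ l (mod p_i)`
    -- and `s_{i,l,k} ≡ k (mod p̄_i)`, for `l ∈ [p_i - 1]` and `k ∈ [p̄_i - 1]`
    (hs : ∀ i : Fin n, ∀ l k : ℕ, 1 ≤ l → l < P i.val → 1 ≤ k → k < P (n + i.val) →
      s i l k < P i.val * P (n + i.val) ∧
        s i l k % P i.val = l ∧ s i l k % P (n + i.val) = k)
    (z1 z2 : ℕ)
    (hfpf : ∀ a : Omega n idx neg,
      (pi1 n idx neg s ^ z1 * pi2 n idx neg ^ z2) a ≠ a) :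
    ∀ j : Fin m, ∃ a : Fin 3, ¬ ptil n idx neg j a ∣ z2 :=
  exists_not_dvd_z2_general n m idx hidx neg s z1 z2 hfpf

end SatConstruction
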